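/- There exists an absolute constant C > 0 with the following property. For every probability mass function p on ℕ and every z ∈ ℂ with Re z ≥ 1 and |arg z| ≤ π/4, the derivative of the analytic function ṽ satisfies |ṽ'(z)| = |∑_j p_j (1 − 3e^{−p_j z} + 2e^{−2p_j z} + 2 p_j z e^{−p_j z})| ≤ C · ṽ(|z|) / |z|. -/

import Mathlib

open Real Complex

/-- `ṽ(z) = ∑_j (p_j z + e^{−p_j z}(1 − e^{−p_j z} − 2 p_j z))` for complex `z`
with `Re z ≥ 0`. For real `x ≥ 0` this is real and nonnegative; we take its
real part for the real-variable version. -/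
noncomputable def vtilC (p : ℕ → ℝ) (z : ℂ) : ℂ :=
  ∑' j, ((p j : ℂ) * z
    + Complex.exp (-(p j : ℂ) * z) * (1 - Complex.exp (-(p j : ℂ) * z) - 2 * (p j : ℂ) * z))

/-- The real version `ṽ(x)` for real `x`. -/
noncomputable def vtilR (p : ℕ → ℝ) (x : ℝ) : ℝ :=
  ∑' j, (p j * x + Real.exp (-(p j) * x) * (1 - Real.exp (-(p j) * x) - 2 * p j * x))

/-!
Write `f(u) = u + e^{-u}(1 - e^{-u} - 2u)`, so that `ṽ(x) = ∑ⱼ f(pⱼ x)`, and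
`g(w) = 1 - 3e^{-w} + 2e^{-2w} + 2we^{-w}`, so that the derivative is `∑ⱼ pⱼ g(pⱼ z)`.
The condition `|arg z| ≤ π/4` gives `‖z‖ ≤ 2 Re z`, and this sector is preserved by
`z ↦ pⱼ z`. In the sector we compare `‖w‖ ‖g(w)‖` with `f(‖w‖)`: for `‖w‖ ≤ 1`,
`g(w) = O(‖w‖)` (since `g(0) = 0`) while `f(u) ≳ u²`; for `‖w‖ ≥ 1`, `g(w)` is bounded
because `‖w‖ e^{-Re w} ≤ 2`, while `f(u) ≳ u`. Summing `‖z‖ ‖pⱼ g(pⱼ z)‖ ≤ 300 f(pⱼ ‖z‖)`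
over `j` gives the theorem.
-/

noncomputable def vtilSummand (u : ℝ) : ℝ :=
  u + Real.exp (-u) * (1 - Real.exp (-u) - 2 * u)

noncomputable def vtilDerivSummand (w : ℂ) : ℂ :=
  1 - 3 * Complex.exp (-w) + 2 * Complex.exp (-2 * w) + 2 * w * Complex.exp (-w)

lemma exp_neg_mul_one_add_add_sq_div_four_le_one {u : ℝ} (hu : 0 ≤ u) :
    Real.exp (-u) * (1 + u + u ^ 2 / 4) ≤ 1 := by
  have hsq : (1 + u / 2) ^ 2 ≤ Real.exp u := by
    calc (1 + u / 2) ^ 2 ≤ Real.exp (u / 2) ^ 2 :=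
          pow_le_pow_left₀ (by positivity) (by linarith [Real.add_one_le_exp (u / 2)]) 2
      _ = Real.exp u := by rw [← Real.exp_nat_mul]; ring_nf
  have hinv : Real.exp (-u) * Real.exp u = 1 := by rw [← Real.exp_add]; simp
  nlinarith [Real.exp_pos (-u)]

lemma mul_exp_neg_le_one {t : ℝ} : t * Real.exp (-t) ≤ 1 := by
  have hinv : Real.exp (-t) * Real.exp t = 1 := by rw [← Real.exp_add]; simp
  nlinarith [Real.exp_pos (-t), Real.add_one_le_exp t]

lemma sq_div_le_vtilSummand {u : ℝ} (hu : 0 ≤ u) (hu1 : u ≤ 1) :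
    u ^ 2 / 21 ≤ vtilSummand u := by
  unfold vtilSummand
  set t := Real.exp (-u)
  have h1 : 1 - u ≤ t := by linarith [Real.add_one_le_exp (-u)]
  have h2 : t * (1 + u + u ^ 2 / 4) ≤ 1 := exp_neg_mul_one_add_add_sq_div_four_le_one hu
  nlinarith [mul_nonneg (sub_nonneg.2 h1) (sub_nonneg.2 h2),
    mul_nonneg hu (mul_nonneg (sub_nonneg.2 h1) (sub_nonneg.2 h2)),
    mul_nonneg hu (sub_nonneg.2 hu1), mul_nonneg (mul_nonneg hu hu) (sub_nonneg.2 hu1),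
    sq_nonneg (t - (1 - u)), mul_nonneg hu (sub_nonneg.2 h2), (Real.exp_pos (-u)).le]

lemma div_le_vtilSummand {u : ℝ} (hu : 1 ≤ u) : u / 9 ≤ vtilSummand u := by
  unfold vtilSummand
  set t := Real.exp (-u)
  have h0 : 0 < t := Real.exp_pos _
  have h2 : t * (1 + u + u ^ 2 / 4) ≤ 1 :=
    exp_neg_mul_one_add_add_sq_div_four_le_one (by linarith)
  have h3 : t ≤ 1 := by nlinarith
  nlinarith [mul_nonneg h0.le (sub_nonneg.2 h3),
    mul_nonneg (mul_nonneg h0.le h0.le) (by linarith : (0 : ℝ) ≤ u - 1),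
    mul_nonneg h0.le (by linarith : (0 : ℝ) ≤ u - 1), sq_nonneg (u - 1)]

lemma vtilSummand_nonneg {u : ℝ} (hu : 0 ≤ u) : 0 ≤ vtilSummand u := by
  rcases le_total u 1 with h | h
  · exact (by positivity : (0 : ℝ) ≤ u ^ 2 / 21).trans (sq_div_le_vtilSummand hu h)
  · exact (by positivity : (0 : ℝ) ≤ u / 9).trans (div_le_vtilSummand h)

lemma vtilSummand_le {u : ℝ} (hu : 0 ≤ u) : vtilSummand u ≤ 2 * u := by
  unfold vtilSummand
  have h1 : 1 - u ≤ Real.exp (-u) := by linarith [Real.add_one_le_exp (-u)]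
  have h3 : Real.exp (-u) ≤ 1 := Real.exp_le_one_iff.mpr (by linarith)
  nlinarith [mul_nonneg (Real.exp_pos (-u)).le hu]

lemma norm_vtilDerivSummand_le_of_norm_le_one {w : ℂ} (hw : ‖w‖ ≤ 1) :
    ‖vtilDerivSummand w‖ ≤ 14 * ‖w‖ := by
  set E := Complex.exp (-w)
  have hg : vtilDerivSummand w = (E - 1 + w) + w + 2 * (1 - E) ^ 2 - 2 * (w * (1 - E)) := by
    have hE2 : Complex.exp (-2 * w) = E * E := by rw [← Complex.exp_add]; ring_nf
    rw [vtilDerivSummand, hE2]; ring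
  have h1 : ‖E - 1 + w‖ ≤ ‖w‖ ^ 2 := by
    simpa [sub_eq_add_neg] using Complex.norm_exp_sub_one_sub_id_le (x := -w) (by simpa using hw)
  have h2 : ‖1 - E‖ ≤ 2 * ‖w‖ := by
    rw [norm_sub_rev]
    simpa using Complex.norm_exp_sub_one_le (x := -w) (by simpa using hw)
  have hw0 := norm_nonneg w
  calc ‖vtilDerivSummand w‖
      ≤ ‖E - 1 + w‖ + ‖w‖ + ‖2 * (1 - E) ^ 2‖ + ‖2 * (w * (1 - E))‖ := by
        rw [hg]
        exact (norm_sub_le _ _).trans (by gcongr; exact norm_add₃_le)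
    _ = ‖E - 1 + w‖ + ‖w‖ + 2 * ‖1 - E‖ ^ 2 + 2 * (‖w‖ * ‖1 - E‖) := by
        simp only [norm_mul, norm_pow, Complex.norm_ofNat]
    _ ≤ ‖w‖ ^ 2 + ‖w‖ + 2 * (2 * ‖w‖) ^ 2 + 2 * (‖w‖ * (2 * ‖w‖)) := by gcongr
    _ ≤ 14 * ‖w‖ := by nlinarith

lemma norm_vtilDerivSummand_le_of_norm_le_two_mul_re {w : ℂ} (hw : ‖w‖ ≤ 2 * w.re) :
    ‖vtilDerivSummand w‖ ≤ 10 := by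
  have hre : 0 ≤ w.re := by linarith [norm_nonneg w]
  have hE : ‖Complex.exp (-w)‖ = Real.exp (-w.re) := by simp [Complex.norm_exp]
  have hE2 : ‖Complex.exp (-2 * w)‖ ≤ 1 := by
    rw [Complex.norm_exp]; exact Real.exp_le_one_iff.mpr (by simp; linarith)
  have hE1 : Real.exp (-w.re) ≤ 1 := Real.exp_le_one_iff.mpr (by linarith)
  have hwE : ‖w‖ * Real.exp (-w.re) ≤ 2 := by
    nlinarith [mul_exp_neg_le_one (t := w.re), Real.exp_pos (-w.re)]
  calc ‖vtilDerivSummand w‖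
      ≤ 1 + 3 * ‖Complex.exp (-w)‖ + 2 * ‖Complex.exp (-2 * w)‖
          + 2 * (‖w‖ * ‖Complex.exp (-w)‖) := by
        unfold vtilDerivSummand
        refine (norm_add_le _ _).trans ?_
        gcongr
        · refine (norm_add_le _ _).trans ?_
          gcongr
          · exact (norm_sub_le _ _).trans (by simp)
          · simp
        · simp [mul_assoc]
    _ ≤ 10 := by rw [hE]; linarith

lemma norm_mul_norm_vtilDerivSummand_le {w : ℂ} (hw : ‖w‖ ≤ 2 * w.re) :
    ‖w‖ * ‖vtilDerivSummand w‖ ≤ 300 * vtilSummand ‖w‖ := by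
  have hw0 := norm_nonneg w
  have hg0 := norm_nonneg (vtilDerivSummand w)
  rcases le_total ‖w‖ 1 with h | h
  · nlinarith [norm_vtilDerivSummand_le_of_norm_le_one h, sq_div_le_vtilSummand hw0 h]
  · nlinarith [norm_vtilDerivSummand_le_of_norm_le_two_mul_re hw, div_le_vtilSummand h]

lemma norm_le_two_mul_re_of_abs_arg_le {z : ℂ} (harg : |arg z| ≤ π / 4) :
    ‖z‖ ≤ 2 * z.re := by
  rcases eq_or_ne z 0 with rfl | hz
  · simp
  have hcos : √2 / 2 ≤ Real.cos (arg z) := by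
    rw [← Real.cos_abs, ← Real.cos_pi_div_four]
    exact Real.cos_le_cos_of_nonneg_of_le_pi (abs_nonneg _) (by linarith [Real.pi_pos]) harg
  rw [Complex.cos_arg hz, le_div_iff₀ (norm_pos_iff.mpr hz)] at hcos
  nlinarith [Real.one_lt_sqrt_two, norm_nonneg z]

lemma vtilR_eq_tsum_vtilSummand (p : ℕ → ℝ) (x : ℝ) :
    vtilR p x = ∑' j, vtilSummand (p j * x) := by
  simp only [vtilR, vtilSummand, neg_mul, mul_assoc]

lemma norm_mul_norm_tsum_vtilDerivSummand_le {p : ℕ → ℝ} (hp : ∀ j, 0 ≤ p j) (hps : Summable p)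
    {z : ℂ} (hz : ‖z‖ ≤ 2 * z.re) :
    ‖z‖ * ‖∑' j, (p j : ℂ) * vtilDerivSummand (p j * z)‖ ≤ 300 * vtilR p ‖z‖ := by
  have hterm : ∀ j, ‖z * ((p j : ℂ) * vtilDerivSummand (p j * z))‖
      ≤ 300 * vtilSummand (p j * ‖z‖) := by
    intro j
    have hpz : ‖(p j : ℂ) * z‖ = p j * ‖z‖ := by
      rw [norm_mul, Complex.norm_of_nonneg (hp j)]
    have hsector : ‖(p j : ℂ) * z‖ ≤ 2 * ((p j : ℂ) * z).re := by
      rw [hpz, re_ofReal_mul]; nlinarith [hp j]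
    calc _ = ‖(p j : ℂ) * z‖ * ‖vtilDerivSummand (p j * z)‖ := by
          rw [norm_mul, norm_mul, norm_mul]; ring
      _ ≤ 300 * vtilSummand ‖(p j : ℂ) * z‖ := norm_mul_norm_vtilDerivSummand_le hsector
      _ = _ := by rw [hpz]
  have hpz0 : ∀ j, 0 ≤ p j * ‖z‖ := fun j => mul_nonneg (hp j) (norm_nonneg z)
  have hsum : Summable fun j => 300 * vtilSummand (p j * ‖z‖) :=
    (Summable.of_nonneg_of_le (fun j => vtilSummand_nonneg (hpz0 j))
      (fun j => vtilSummand_le (hpz0 j)) ((hps.mul_right ‖z‖).mul_left 2)).mul_left 300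
  calc ‖z‖ * ‖∑' j, (p j : ℂ) * vtilDerivSummand (p j * z)‖
      = ‖∑' j, z * ((p j : ℂ) * vtilDerivSummand (p j * z))‖ := by
        rw [tsum_mul_left, norm_mul]
    _ ≤ ∑' j, 300 * vtilSummand (p j * ‖z‖) := tsum_of_norm_bounded hsum.hasSum hterm
    _ = 300 * vtilR p ‖z‖ := by rw [tsum_mul_left, vtilR_eq_tsum_vtilSummand]

/-- Lemma 6.8: for `Re z ≥ 1` and `|arg z| ≤ π/4`, the termwise
derivative of `ṽ` satisfies `|ṽ'(z)| ≤ C ṽ(|z|)/|z|` with an absolute constant. -/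
theorem vtil_deriv_bound :
    ∃ C : ℝ, 0 < C ∧
      ∀ (p : ℕ → ℝ), (∀ j, 0 ≤ p j) → (∑' j, p j) = 1 →
      ∀ z : ℂ, 1 ≤ z.re → |Complex.arg z| ≤ π / 4 →
        ‖(∑' j, ((p j : ℂ) * (1 - 3 * Complex.exp (-(p j : ℂ) * z)
            + 2 * Complex.exp (-2 * (p j : ℂ) * z)
            + 2 * (p j : ℂ) * z * Complex.exp (-(p j : ℂ) * z))))‖
          ≤ C * vtilR p ‖z‖ / ‖z‖ := by
  refine ⟨300, by norm_num, fun p hp hsum z hre harg => ?_⟩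
  have hps : Summable p := by
    by_contra h
    simp [tsum_eq_zero_of_not_summable h] at hsum
  have hz : 0 < ‖z‖ := by linarith [Complex.re_le_norm z]
  have hsummand : ∀ j, (p j : ℂ) * (1 - 3 * Complex.exp (-(p j : ℂ) * z)
      + 2 * Complex.exp (-2 * (p j : ℂ) * z) + 2 * (p j : ℂ) * z * Complex.exp (-(p j : ℂ) * z))
      = p j * vtilDerivSummand (p j * z) := fun j => by
    simp only [vtilDerivSummand, neg_mul, mul_assoc]
  rw [tsum_congr hsummand, le_div_iff₀ hz, mul_comm]
  exact norm_mul_norm_tsum_vtilDerivSummand_le hp hps (norm_le_two_mul_re_of_abs_arg_le harg)
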